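/- arXiv:1105.2652 — 2 statements merged into one kernel-verified Lean document; each statement's English description precedes it below -/
import Mathlib

section
/- Assume that p_j : ℝ^N → [0,∞), j = 1,…,d, are spherically symmetric continuous functions (i.e. p_j(x) = p_j(|x|)), that f_1,…,f_d satisfy (C1)–(C3), and that r ↦ r^{2N-2} Σ_{j=1}^d p_j(r) is nondecreasing for all sufficiently large r. If ∫₀^∞ t^{1-N} ∫₀^t s^{N-1} p_j(s) ds dt = ∞ for every j = 1,…,d, then every nonnegative nontrivial entire radial solution (u_1,…,u_d) of the system Δu_i = p_i(x) f_i(u_1,…,u_d), i = 1,…,d, is large, i.e., u_i(x) → ∞ as |x| → ∞ for every i. -/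
/-!
Write `u_i(x) = φ_i(|x|)`. The system becomes `(r^(N-1) φ_i')' = r^(N-1) p_i f_i(φ) ≥ 0`, so
`r^(N-1) φ_i'` is nondecreasing and vanishes at `0`, and every `φ_i` is nondecreasing. By
nontriviality some `φ_k(r₀) > 0`, and then monotonicity of `f_i` gives `f_i(φ(r)) ≥ c_i > 0` for
`r ≥ r₀`. Integrating twice,
`φ_i(r) ≥ φ_i(r₀) + c_i ∫_{r₀}^r t^(1-N) ∫_{r₀}^t s^(N-1) p_i(s) ds dt`.
This differs from the divergent integral of the hypothesis by a bounded part near `0` and by a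
multiple of `∫ t^(1-N) dt`, which converges at infinity since `N ≥ 3`; hence `φ_i → ∞`.
-/

open MeasureTheory Set Filter

/-- The Laplacian of a function on Euclidean space, as the sum of the pure second
derivatives in the coordinate directions. -/
noncomputable def lap {N : ℕ} (u : EuclideanSpace ℝ (Fin N) → ℝ)
    (x : EuclideanSpace ℝ (Fin N)) : ℝ :=
  ∑ i : Fin N,
    iteratedFDeriv ℝ 2 u x ![EuclideanSpace.single i 1, EuclideanSpace.single i 1]

/-- The Laplacian of `x ↦ φ ‖x‖` on `ℝ^(n+1)`, at `‖x‖ = r`. -/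
noncomputable def radialLap (n : ℕ) (φ : ℝ → ℝ) (r : ℝ) : ℝ :=
  deriv (deriv φ) r + n * (deriv φ r / r)

section LineDerivatives

variable {E F : Type*} [NormedAddCommGroup E] [NormedSpace ℝ E]
  [NormedAddCommGroup F] [NormedSpace ℝ F]

theorem hasDerivAt_comp_add_smul {f : E → F} {x v : E} {t : ℝ}
    (hf : DifferentiableAt ℝ f (x + t • v)) :
    HasDerivAt (fun s : ℝ => f (x + s • v)) (fderiv ℝ f (x + t • v) v) t := by
  have hline : HasDerivAt (fun s : ℝ => x + s • v) v t := by
    simpa using ((hasDerivAt_id t).smul_const v).const_add x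
  exact hf.hasFDerivAt.comp_hasDerivAt t hline

theorem iteratedFDeriv_two_apply_self {f : E → F} (hf : ContDiff ℝ 2 f) (x v : E) :
    iteratedFDeriv ℝ 2 f x ![v, v] = deriv (deriv fun t : ℝ => f (x + t • v)) 0 := by
  have hderiv : deriv (fun t : ℝ => f (x + t • v)) = fun t => fderiv ℝ f (x + t • v) v :=
    funext fun t => (hasDerivAt_comp_add_smul (hf.differentiable (by norm_num) _)).deriv
  have hderiv₂ := hasDerivAt_comp_add_smul (x := x) (v := v) (t := 0)
    ((hf.fderiv_right (m := 1) (by norm_num)).differentiable (by norm_num) _)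
  rw [iteratedFDeriv_two_apply, hderiv]
  simpa [Function.comp_def] using
    ((ContinuousLinearMap.apply ℝ F v).hasFDerivAt.comp_hasDerivAt 0 hderiv₂).deriv.symm

end LineDerivatives

theorem apply_eq_apply_norm_smul {E α : Type*} [SeminormedAddCommGroup E] [NormedSpace ℝ E]
    {u : E → α} (hrad : ∀ x y, ‖x‖ = ‖y‖ → u x = u y) {e : E} (he : ‖e‖ = 1) (x : E) :
    u x = u (‖x‖ • e) :=
  hrad _ _ (by simp [norm_smul, he])

theorem deriv_deriv_comp_sqrt_sq_add_sq {φ : ℝ → ℝ} (hφ : ContDiff ℝ 2 φ) {r : ℝ} (hr : 0 < r) :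
    deriv (deriv fun t => φ √(r ^ 2 + t ^ 2)) 0 = deriv φ r / r := by
  set h : ℝ → ℝ := fun t => √(r ^ 2 + t ^ 2)
  have hpos : ∀ t, 0 < h t := fun t => Real.sqrt_pos.2 (by positivity)
  have hh : ∀ t, HasDerivAt h (t / h t) t := by
    intro t
    convert ((hasDerivAt_pow 2 t).const_add (r ^ 2)).sqrt (by positivity) using 1
    have hne : √(r ^ 2 + t ^ 2) ≠ 0 := (hpos t).ne'
    simp only [h]
    field_simp
    ring
  have h0 : h 0 = r := by simp [h, Real.sqrt_sq hr.le]
  have hderiv : deriv (fun t => φ (h t)) = fun t => deriv φ (h t) * (t / h t) :=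
    funext fun t => ((hφ.differentiable (by norm_num) _).hasDerivAt.comp t (hh t)).deriv
  have hA : HasDerivAt (fun t => deriv φ (h t)) (deriv (deriv φ) (h 0) * (0 / h 0)) 0 :=
    (hφ.differentiable_deriv_two _).hasDerivAt.comp 0 (hh 0)
  have hB : HasDerivAt (fun t => t / h t) ((1 * h 0 - 0 * (0 / h 0)) / h 0 ^ 2) 0 :=
    (hasDerivAt_id 0).div (hh 0) (hpos 0).ne'
  rw [hderiv, (hA.fun_mul hB).deriv, h0]
  field_simp
  ring

theorem norm_smul_single_add_smul_single {N : ℕ} {i j : Fin N} (hij : i ≠ j) (r t : ℝ) :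
    ‖r • EuclideanSpace.single i (1:ℝ) + t • EuclideanSpace.single j 1‖ = √(r ^ 2 + t ^ 2) := by
  have horth : inner ℝ (r • EuclideanSpace.single i (1:ℝ)) (t • EuclideanSpace.single j 1) = 0 := by
    simp [real_inner_smul_left, real_inner_smul_right, EuclideanSpace.inner_single_left, hij]
  rw [← Real.sqrt_sq (norm_nonneg _), sq, norm_add_sq_eq_norm_sq_add_norm_sq_real horth]
  simp [norm_smul, sq]

theorem lap_smul_single_of_radial {N : ℕ} {u : EuclideanSpace ℝ (Fin N) → ℝ}
    (hu : ContDiff ℝ 2 u) (hrad : ∀ x y, ‖x‖ = ‖y‖ → u x = u y) (i₀ : Fin N) {r : ℝ}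
    (hr : 0 < r) :
    lap u (r • EuclideanSpace.single i₀ 1) =
      radialLap (N - 1) (fun s => u (s • EuclideanSpace.single i₀ 1)) r := by
  set e : Fin N → EuclideanSpace ℝ (Fin N) := fun i => EuclideanSpace.single i 1
  set φ : ℝ → ℝ := fun s => u (s • e i₀)
  have hφ : ContDiff ℝ 2 φ := hu.comp (contDiff_id.smul contDiff_const)
  have hterm : ∀ i, iteratedFDeriv ℝ 2 u (r • e i₀) ![e i, e i] =
      if i = i₀ then deriv (deriv φ) r else deriv φ r / r := by
    intro i
    rw [iteratedFDeriv_two_apply_self hu]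
    split_ifs with hi
    · subst hi
      have hline : (fun t => u (r • e i + t • e i)) = fun t => φ (r + t) := by
        funext t; simp only [φ, add_smul]
      have hshift : deriv (fun t => φ (r + t)) = fun t => deriv φ (r + t) :=
        funext fun t => deriv_comp_const_add φ r t
      rw [hline, hshift, deriv_comp_const_add, add_zero]
    · have hline : (fun t => u (r • e i₀ + t • e i)) = fun t => φ √(r ^ 2 + t ^ 2) := by
        funext t
        rw [apply_eq_apply_norm_smul hrad (e := e i₀) (by simp [e]),
          norm_smul_single_add_smul_single (Ne.symm hi)]
      rw [hline, deriv_deriv_comp_sqrt_sq_add_sq hφ hr]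
  rw [lap, Finset.sum_congr rfl fun i _ => hterm i, Finset.sum_ite, Finset.filter_eq',
    Finset.filter_ne', if_pos (Finset.mem_univ _), Finset.sum_singleton, Finset.sum_const,
    Finset.card_erase_of_mem (Finset.mem_univ _), Finset.card_univ, Fintype.card_fin,
    nsmul_eq_mul, radialLap]

section RadialLap

variable {n : ℕ} {φ : ℝ → ℝ}

theorem hasDerivAt_pow_mul_deriv (hφ : ContDiff ℝ 2 φ) {r : ℝ} (hr : r ≠ 0) :
    HasDerivAt (fun t => t ^ n * deriv φ t) (r ^ n * radialLap n φ r) r := by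
  refine ((hasDerivAt_pow n r).fun_mul (hφ.differentiable_deriv_two r).hasDerivAt).congr_deriv ?_
  rw [radialLap]
  rcases n with _ | n
  · simp
  · rw [Nat.add_sub_cancel, pow_succ]
    field_simp
    push_cast
    ring

theorem pow_mul_deriv_nonneg (hφ : ContDiff ℝ 2 φ) (hn : n ≠ 0)
    (hlap : ∀ r > 0, 0 ≤ radialLap n φ r) {r : ℝ} (hr : 0 ≤ r) : 0 ≤ r ^ n * deriv φ r := by
  have hmono : MonotoneOn (fun t => t ^ n * deriv φ t) (Ici 0) := by
    refine monotoneOn_of_hasDerivWithinAt_nonneg (f' := fun t => t ^ n * radialLap n φ t)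
      (convex_Ici 0)
      ((continuous_pow n).mul (hφ.continuous_deriv one_le_two)).continuousOn
      (fun t ht => ?_) fun t ht => ?_ <;> rw [interior_Ici] at ht
    · exact (hasDerivAt_pow_mul_deriv hφ (ne_of_gt ht)).hasDerivWithinAt
    · exact mul_nonneg (pow_nonneg (le_of_lt ht) n) (hlap t ht)
  simpa [zero_pow hn] using hmono self_mem_Ici hr hr

theorem monotoneOn_of_radialLap_nonneg (hφ : ContDiff ℝ 2 φ) (hn : n ≠ 0)
    (hlap : ∀ r > 0, 0 ≤ radialLap n φ r) : MonotoneOn φ (Ici 0) := by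
  refine monotoneOn_of_hasDerivWithinAt_nonneg (convex_Ici 0) hφ.continuous.continuousOn
    (fun t _ => (hφ.differentiable (by norm_num) t).hasDerivAt.hasDerivWithinAt) fun t ht => ?_
  rw [interior_Ici] at ht
  exact (mul_nonneg_iff_of_pos_left (pow_pos ht n)).1 (pow_mul_deriv_nonneg hφ hn hlap ht.le)

end RadialLap

theorem hasDerivAt_integral_of_continuousOn_Ici {g : ℝ → ℝ} {b a t : ℝ}
    (hg : ContinuousOn g (Ici b)) (ha : b ≤ a) (ht : b < t) :
    HasDerivAt (fun r => ∫ s in a..r, g s) (g t) t := by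
  refine intervalIntegral.integral_hasDerivAt_right ?_ ?_ (hg.continuousAt (Ici_mem_nhds ht))
  · exact (hg.mono fun y hy => (le_min ha ht.le).trans hy.1).intervalIntegrable
  · exact (hg.mono Ioi_subset_Ici_self).stronglyMeasurableAtFilter isOpen_Ioi t ht

theorem tendsto_intervalIntegral_atTop_of_not_integrableOn_Ioi {g : ℝ → ℝ} {a : ℝ}
    (hg : ∀ b ≥ a, IntervalIntegrable g volume a b) (hg_nonneg : ∀ t ≥ a, 0 ≤ g t)
    (hg_int : ¬ IntegrableOn g (Ioi a)) :
    Tendsto (fun r => ∫ t in a..r, g t) atTop atTop := by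
  have hmono : MonotoneOn (fun r => ∫ t in a..r, g t) (Ici a) := fun r hr s hs hrs =>
    intervalIntegral.integral_mono_interval le_rfl hr hrs
      ((ae_restrict_iff' measurableSet_Ioc).2 (.of_forall fun t ht => hg_nonneg t ht.1.le))
      (hg s hs)
  have hunbdd : ∀ M, ∃ R ≥ a, M ≤ ∫ t in a..R, g t := by
    by_contra! hbdd
    obtain ⟨M, hM⟩ := hbdd
    refine hg_int (integrableOn_Ioi_of_intervalIntegral_norm_bounded M a (fun b => ?_)
      tendsto_id ?_)
    · rcases le_total a b with hab | hba
      · exact (hg b hab).1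
      · simp [Ioc_eq_empty_of_le hba]
    · filter_upwards [eventually_ge_atTop a] with R hR
      dsimp only [id]
      rw [intervalIntegral.integral_congr fun t ht =>
        Real.norm_of_nonneg (hg_nonneg t ((le_min le_rfl hR).trans ht.1))]
      exact (hM R hR).le
  refine tendsto_atTop.2 fun M => ?_
  obtain ⟨R, hRa, hMR⟩ := hunbdd M
  filter_upwards [eventually_ge_atTop R] with r hr
  exact hMR.trans (hmono hRa (hRa.trans hr) hr)

/-- For `n = N - 1` and `a = 0`, this is `v'(t)` for the radial solution of `Δv = p` on `ℝ^N`. -/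
noncomputable def meanFlux (n : ℕ) (p : ℝ → ℝ) (a t : ℝ) : ℝ :=
  (∫ s in a..t, s ^ n * p s) / t ^ n

section MeanFlux

variable {n : ℕ} {p : ℝ → ℝ} {a : ℝ}

theorem meanFlux_nonneg (hp : ∀ t ≥ 0, 0 ≤ p t) (ha : 0 ≤ a) {t : ℝ} (ht : a ≤ t) :
    0 ≤ meanFlux n p a t :=
  div_nonneg (intervalIntegral.integral_nonneg ht fun s hs =>
      mul_nonneg (pow_nonneg (ha.trans hs.1) n) (hp s (ha.trans hs.1)))
    (pow_nonneg (ha.trans ht) n)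

theorem continuousOn_meanFlux (hp : ContinuousOn p (Ici 0)) (ha : 0 ≤ a) :
    ContinuousOn (meanFlux n p a) (Ioi 0) := by
  have hq : ContinuousOn (fun s => s ^ n * p s) (Ici 0) := (continuousOn_pow n).mul hp
  refine ContinuousOn.div (fun t ht => ?_) (continuousOn_pow n) fun t ht => pow_ne_zero n ht.ne'
  exact (hasDerivAt_integral_of_continuousOn_Ici hq ha ht).continuousAt.continuousWithinAt

theorem integrableOn_Ioc_meanFlux_zero (hp : ContinuousOn p (Ici 0)) (b : ℝ) :
    IntegrableOn (meanFlux n p 0) (Ioc 0 b) := by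
  obtain ⟨M, hM⟩ := isCompact_Icc.exists_bound_of_continuousOn (hp.mono Icc_subset_Ici_self)
  refine IntegrableOn.of_bound measure_Ioc_lt_top
    (((continuousOn_meanFlux hp le_rfl).mono Ioc_subset_Ioi_self).aestronglyMeasurable
      measurableSet_Ioc) (M * b) ?_
  refine (ae_restrict_iff' measurableSet_Ioc).2 (.of_forall fun t ⟨ht, htb⟩ => ?_)
  have htn : 0 < t ^ n := pow_pos ht n
  have hbound : ‖∫ s in (0:ℝ)..t, s ^ n * p s‖ ≤ t ^ n * M * |t - 0| := by
    refine intervalIntegral.norm_integral_le_of_norm_le_const fun s ⟨hs, hst⟩ => ?_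
    rw [min_eq_left ht.le] at hs
    rw [max_eq_right ht.le] at hst
    rw [norm_mul, Real.norm_of_nonneg (pow_nonneg hs.le n)]
    exact mul_le_mul (pow_le_pow_left₀ hs.le hst n) (hM s ⟨hs.le, hst.trans htb⟩)
      (norm_nonneg _) htn.le
  rw [meanFlux, norm_div, Real.norm_of_nonneg htn.le, div_le_iff₀ htn]
  rw [sub_zero, abs_of_pos ht] at hbound
  have hM0 : 0 ≤ M := (norm_nonneg _).trans (hM t ⟨ht.le, htb⟩)
  calc _ ≤ t ^ n * M * t := hbound
    _ ≤ t ^ n * M * b := mul_le_mul_of_nonneg_left htb (mul_nonneg htn.le hM0)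
    _ = M * b * t ^ n := by ring

theorem not_integrableOn_Ioi_meanFlux (hn : 1 < n) (hp : ContinuousOn p (Ici 0))
    (hdiv : ¬ IntegrableOn (meanFlux n p 0) (Ioi 0)) (ha : 0 < a) :
    ¬ IntegrableOn (meanFlux n p a) (Ioi a) := by
  intro hQ
  set C := ∫ s in (0:ℝ)..a, s ^ n * p s
  have hq : ∀ b ≥ 0, IntervalIntegrable (fun s => s ^ n * p s) volume 0 b := fun b hb =>
    (((continuousOn_pow n).mul hp).mono fun s hs =>
      (le_min le_rfl hb).trans hs.1).intervalIntegrable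
  have hsplit : EqOn (fun t => meanFlux n p a t + C * t ^ (-(n:ℝ))) (meanFlux n p 0) (Ioi a) := by
    intro t ht
    have ht0 : 0 < t := ha.trans ht
    simp only [meanFlux, Real.rpow_neg ht0.le, Real.rpow_natCast]
    rw [← intervalIntegral.integral_add_adjacent_intervals (hq a ha.le)
      (((hq a ha.le).symm.trans (hq t ht0.le)))]
    field_simp
    ring
  have hpow : IntegrableOn (fun t : ℝ => t ^ (-(n:ℝ))) (Ioi a) :=
    integrableOn_Ioi_rpow_of_lt (by norm_cast; omega) ha
  refine hdiv ?_
  rw [← Ioc_union_Ioi_eq_Ioi ha.le]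
  exact (integrableOn_Ioc_meanFlux_zero hp a).union
    ((hQ.add (hpow.const_mul C)).congr_fun hsplit measurableSet_Ioi)

theorem tendsto_integral_meanFlux_atTop (hn : 1 < n) (hp_cont : ContinuousOn p (Ici 0))
    (hp : ∀ t ≥ 0, 0 ≤ p t) (hdiv : ¬ IntegrableOn (meanFlux n p 0) (Ioi 0)) (ha : 0 < a) :
    Tendsto (fun r => ∫ t in a..r, meanFlux n p a t) atTop atTop :=
  tendsto_intervalIntegral_atTop_of_not_integrableOn_Ioi
    (fun b hb => ((continuousOn_meanFlux hp_cont ha.le).mono fun t ht => by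
      rw [uIcc_of_le hb] at ht; exact ha.trans_le ht.1).intervalIntegrable)
    (fun t ht => meanFlux_nonneg hp ha.le ht) (not_integrableOn_Ioi_meanFlux hn hp_cont hdiv ha)

end MeanFlux

section RadialLowerBound

variable {n : ℕ} {φ p : ℝ → ℝ} {a c : ℝ}

theorem mul_meanFlux_le_deriv (hφ : ContDiff ℝ 2 φ) (hn : n ≠ 0)
    (hlap : ∀ r > 0, 0 ≤ radialLap n φ r) (hp : ContinuousOn p (Ici 0)) (ha : 0 < a)
    (hcp : ∀ t ≥ a, c * p t ≤ radialLap n φ t) {r : ℝ} (har : a ≤ r) :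
    c * meanFlux n p a r ≤ deriv φ r := by
  have hr : 0 < r := ha.trans_le har
  have hftc : c * ∫ s in a..r, s ^ n * p s ≤ r ^ n * deriv φ r - a ^ n * deriv φ a := by
    rw [← intervalIntegral.integral_const_mul]
    refine intervalIntegral.integral_le_sub_of_hasDeriv_right_of_le har
      ((continuous_pow n).mul (hφ.continuous_deriv one_le_two)).continuousOn
      (fun t ht => (hasDerivAt_pow_mul_deriv hφ (ha.trans ht.1).ne').hasDerivWithinAt)
      ((continuousOn_const.mul ((continuousOn_pow n).mul hp)).mono
        fun t ht => ha.le.trans ht.1).integrableOn_Icc fun t ht => ?_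
    calc c * (t ^ n * p t) = t ^ n * (c * p t) := by ring
      _ ≤ t ^ n * radialLap n φ t :=
        mul_le_mul_of_nonneg_left (hcp t ht.1.le) (pow_nonneg (ha.trans ht.1).le n)
  have ha' := pow_mul_deriv_nonneg hφ hn hlap ha.le
  rw [meanFlux, mul_div_assoc', div_le_iff₀ (pow_pos hr n)]
  linarith

theorem add_mul_integral_meanFlux_le (hφ : ContDiff ℝ 2 φ) (hn : n ≠ 0)
    (hlap : ∀ r > 0, 0 ≤ radialLap n φ r) (hp : ContinuousOn p (Ici 0)) (ha : 0 < a)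
    (hcp : ∀ t ≥ a, c * p t ≤ radialLap n φ t) {r : ℝ} (har : a ≤ r) :
    φ a + c * ∫ t in a..r, meanFlux n p a t ≤ φ r := by
  have hftc : ∫ t in a..r, c * meanFlux n p a t ≤ φ r - φ a :=
    intervalIntegral.integral_le_sub_of_hasDeriv_right_of_le har
      hφ.continuous.continuousOn
      (fun t _ => (hφ.differentiable (by norm_num) t).hasDerivAt.hasDerivWithinAt)
      ((continuousOn_const.mul (continuousOn_meanFlux hp ha.le)).mono
        fun t ht => ha.trans_le ht.1).integrableOn_Icc
      fun t ht => mul_meanFlux_le_deriv hφ hn hlap hp ha hcp ht.1.le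
  rw [intervalIntegral.integral_const_mul] at hftc
  linarith

theorem tendsto_atTop_of_mul_le_radialLap (hφ : ContDiff ℝ 2 φ) (hn : 1 < n)
    (hlap : ∀ r > 0, 0 ≤ radialLap n φ r) (hp_cont : ContinuousOn p (Ici 0))
    (hp : ∀ t ≥ 0, 0 ≤ p t) (hdiv : ¬ IntegrableOn (meanFlux n p 0) (Ioi 0)) (ha : 0 < a)
    (hc : 0 < c) (hcp : ∀ t ≥ a, c * p t ≤ radialLap n φ t) :
    Tendsto φ atTop atTop := by
  refine tendsto_atTop_mono' atTop ?_ (tendsto_atTop_add_const_left _ (φ a)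
    ((tendsto_integral_meanFlux_atTop hn hp_cont hp hdiv ha).const_mul_atTop hc))
  filter_upwards [eventually_ge_atTop a] with r hr
  exact add_mul_integral_meanFlux_le hφ (by omega) hlap hp_cont ha hcp hr

end RadialLowerBound

section SingleCoordinate

variable {ι : Type*} [DecidableEq ι] {f : (ι → ℝ) → ℝ} {k : ι} {a : ℝ}

theorem pos_apply_single (hf : ∀ v, (∀ i, 0 ≤ v i) → (∃ i, 0 < v i) → 0 < f v) (ha : 0 < a) :
    0 < f (Pi.single k a) :=
  hf _ (fun i => (Pi.single_nonneg (α := fun _ => ℝ)).2 ha.le i) ⟨k, by simpa using ha⟩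

theorem apply_single_le (hf : ∀ v w, (∀ i, 0 ≤ v i) → (∀ i, v i ≤ w i) → f v ≤ f w)
    (ha : 0 ≤ a) {v : ι → ℝ} (hv : ∀ i, 0 ≤ v i) (hav : a ≤ v k) : f (Pi.single k a) ≤ f v := by
  refine hf _ _ (fun i => (Pi.single_nonneg (α := fun _ => ℝ)).2 ha i) fun i => ?_
  rcases eq_or_ne i k with rfl | hi
  · simpa using hav
  · simpa [hi] using hv i

end SingleCoordinate

theorem stmt3_general
    (N d : ℕ) (hN : 3 ≤ N)
    -- spherically symmetric continuous nonnegative pⱼ, given by their radial profiles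
    (p : Fin d → ℝ → ℝ)
    (hp_cont : ∀ j, ContinuousOn (p j) (Ici 0))
    (hp_nonneg : ∀ j, ∀ t ≥ (0:ℝ), 0 ≤ p j t)
    (f : Fin d → (Fin d → ℝ) → ℝ)
    -- (C1)
    (hf_nonneg : ∀ j v, (∀ i, 0 ≤ v i) → 0 ≤ f j v)
    (hfpos : ∀ j v, (∀ i, 0 ≤ v i) → (∃ i, 0 < v i) → 0 < f j v)
    -- (C2)
    (hC2 : ∀ j v w, (∀ i, 0 ≤ v i) → (∀ i, v i ≤ w i) → f j v ≤ f j w)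
    -- ∫₀^∞ t^{1-N} ∫₀^t s^{N-1} pⱼ(s) ds dt = ∞ for every j
    (hdiv : ∀ j, ¬ IntegrableOn
      (fun t : ℝ => (∫ s in (0:ℝ)..t, s ^ (N - 1) * p j s) / t ^ (N - 1)) (Ioi 0)) :
    -- conclusion: every nonnegative nontrivial entire radial solution is large
    ∀ u : Fin d → EuclideanSpace ℝ (Fin N) → ℝ,
      (∀ i, ContDiff ℝ 2 (u i)) →
      (∀ i x, 0 ≤ u i x) →
      (∃ i x, u i x ≠ 0) →
      (∀ i x y, ‖x‖ = ‖y‖ → u i x = u i y) →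
      (∀ i x, lap (u i) x = p i ‖x‖ * f i (fun j => u j x)) →
      ∀ i, Tendsto (u i) (Filter.comap norm Filter.atTop) Filter.atTop := by
  intro u hu_smooth hu_nonneg ⟨k, x₀, hx₀⟩ hu_rad hu_lap i
  set e : EuclideanSpace ℝ (Fin N) := EuclideanSpace.single ⟨0, by omega⟩ 1
  have he : ‖e‖ = 1 := by simp [e]
  set φ : Fin d → ℝ → ℝ := fun j r => u j (r • e)
  have hu_eq : ∀ j x, u j x = φ j ‖x‖ := fun j => apply_eq_apply_norm_smul (hu_rad j) he
  have hφ : ∀ j, ContDiff ℝ 2 (φ j) := fun j =>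
    (hu_smooth j).comp (contDiff_id.smul contDiff_const)
  have hode : ∀ j, ∀ r > 0, radialLap (N - 1) (φ j) r = p j r * f j (fun l => φ l r) := by
    intro j r hr
    rw [← lap_smul_single_of_radial (hu_smooth j) (hu_rad j) _ hr, hu_lap, norm_smul, he,
      mul_one, Real.norm_of_nonneg hr.le]
  have hlap : ∀ j, ∀ r > 0, 0 ≤ radialLap (N - 1) (φ j) r := fun j r hr => by
    rw [hode j r hr]
    exact mul_nonneg (hp_nonneg j r hr.le) (hf_nonneg j _ fun l => hu_nonneg l _)
  have hφ_mono : ∀ j, MonotoneOn (φ j) (Ici 0) := fun j =>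
    monotoneOn_of_radialLap_nonneg (hφ j) (by omega) (hlap j)
  set r₀ := ‖x₀‖ + 1
  have hr₀ : 0 < r₀ := by positivity
  have hk : 0 < φ k r₀ := by
    refine (lt_of_le_of_ne (hu_nonneg k x₀) (Ne.symm hx₀)).trans_le ?_
    rw [hu_eq k x₀]
    exact hφ_mono k (norm_nonneg _) hr₀.le (by linarith)
  set c := f i (Pi.single k (φ k r₀))
  have hc : 0 < c := pos_apply_single (hfpos i) hk
  have hcp : ∀ t ≥ r₀, c * p i t ≤ radialLap (N - 1) (φ i) t := by
    intro t ht
    rw [hode i t (hr₀.trans_le ht), mul_comm]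
    have hf_ge : c ≤ f i (fun l => φ l t) := apply_single_le (hC2 i) hk.le
      (fun l => hu_nonneg l _) (hφ_mono k hr₀.le (hr₀.le.trans ht) ht)
    exact mul_le_mul_of_nonneg_left hf_ge (hp_nonneg i t (hr₀.le.trans ht))
  exact ((tendsto_atTop_of_mul_le_radialLap (hφ i) (by omega) (hlap i) (hp_cont i)
    (hp_nonneg i) (hdiv i) hr₀ hc hcp).comp tendsto_comap).congr fun x => (hu_eq i x).symm

theorem stmt3
    (N d : ℕ) (hN : 3 ≤ N) (hd : 1 ≤ d)
    -- spherically symmetric continuous nonnegative pⱼ, given by their radial profiles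
    (p : Fin d → ℝ → ℝ)
    (hp_cont : ∀ j, ContinuousOn (p j) (Ici 0))
    (hp_nonneg : ∀ j, ∀ t ≥ (0:ℝ), 0 ≤ p j t)
    (f : Fin d → (Fin d → ℝ) → ℝ)
    -- (C1)
    (hf_nonneg : ∀ j v, (∀ i, 0 ≤ v i) → 0 ≤ f j v)
    (hC1 : ∀ j, ContDiffOn ℝ 1 (f j) {v : Fin d → ℝ | ∀ i, 0 ≤ v i})
    (hf0 : ∀ j, f j (fun _ => 0) = 0)
    (hfpos : ∀ j v, (∀ i, 0 ≤ v i) → (∃ i, 0 < v i) → 0 < f j v)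
    -- (C2)
    (hC2 : ∀ j v w, (∀ i, 0 ≤ v i) → (∀ i, v i ≤ w i) → f j v ≤ f j w)
    -- (C3)
    (hC3 : ¬ IntegrableOn
      (fun s : ℝ => (∫ t in (0:ℝ)..s, ∑ i, f i (fun _ => t)) ^ (-(1/2) : ℝ)) (Ioi 1))
    -- r ↦ r^{2N-2} Σⱼ pⱼ(r) is nondecreasing for large r
    (R₀ : ℝ)
    (hmono : MonotoneOn (fun r : ℝ => r ^ (2 * N - 2) * ∑ j, p j r) (Ici R₀))
    -- ∫₀^∞ t^{1-N} ∫₀^t s^{N-1} pⱼ(s) ds dt = ∞ for every j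
    (hdiv : ∀ j, ¬ IntegrableOn
      (fun t : ℝ => (∫ s in (0:ℝ)..t, s ^ (N - 1) * p j s) / t ^ (N - 1)) (Ioi 0)) :
    -- conclusion: every nonnegative nontrivial entire radial solution is large
    ∀ u : Fin d → EuclideanSpace ℝ (Fin N) → ℝ,
      (∀ i, ContDiff ℝ 2 (u i)) →
      (∀ i x, 0 ≤ u i x) →
      (∃ i x, u i x ≠ 0) →
      (∀ i x y, ‖x‖ = ‖y‖ → u i x = u i y) →
      (∀ i x, lap (u i) x = p i ‖x‖ * f i (fun j => u j x)) →
      ∀ i, Tendsto (u i) (Filter.comap norm Filter.atTop) Filter.atTop :=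
  stmt3_general N d hN p hp_cont hp_nonneg f hf_nonneg hfpos hC2 hdiv
end

section
/- Suppose (C1)–(C2) hold, φ_1,…,φ_d : [0,∞) → [0,∞) are continuous, and r ↦ r^{2N-2} Σ_{i=1}^d φ_i(r) is nondecreasing on [R,∞) for some R > 0. Let {w_i^k} be the successive approximations defined by w_i^0 ≡ 1/d and w_i^k(r) = 1/d + ∫₀^r t^{1-N} ∫₀^t s^{N-1} φ_i(s) f_i(w_1^{k-1}(s),…,w_d^{k-1}(s)) ds dt, and set C = [R^{N-1} (Σ_{i=1}^d w_i^k)'(R)]². Then for every k ≥ 1 and every r ≥ R one has (Σ_{i=1}^d w_i^k)'(r) ≤ √C · r^{1-N} + √(2 Σ_{i=1}^d φ_i(r)) · [F(Σ_{i=1}^d w_i^k(r))]^{1/2}, where F(s) = ∫₀^s Σ_{i=1}^d f_i(t,…,t) dt. -/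
/-!
Let `S = Σᵢ wᵢᵏ` and `E(r) = r^{N-1} S'(r) = ∫₀ʳ s^{N-1} Σᵢ φᵢ fᵢ(w^{k-1}) ds`. The iterates
increase in `k`, so `fᵢ(w^{k-1}) ≤ fᵢ(S,…,S) ≤ F'(S)`, and on `[R, r]` the monotonicity of
`s^{2N-2} Σᵢ φᵢ` gives
`(E²)' = 2 E E' ≤ 2 s^{2N-2} Σᵢ φᵢ(s) F'(S) S' ≤ 2 r^{2N-2} Σᵢ φᵢ(r) (F ∘ S)'`.
Integrating over `[R, r]`, `E(r)² ≤ E(R)² + 2 r^{2N-2} Σᵢ φᵢ(r) F(S(r))`, and the bound follows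
by taking square roots and dividing by `r^{N-1}`.
-/

open MeasureTheory Set Filter intervalIntegral

section Primitive

variable {h : ℝ → ℝ} {c : ℝ}

theorem ContinuousOn.intervalIntegrable_of_Ici (hh : ContinuousOn h (Ici c)) {a b : ℝ}
    (ha : c ≤ a) (hb : c ≤ b) : IntervalIntegrable h volume a b :=
  (hh.mono fun _ hx => (le_min ha hb).trans hx.1).intervalIntegrable

theorem ContinuousOn.continuousOn_primitive_Ici (hh : ContinuousOn h (Ici c)) :
    ContinuousOn (fun r => ∫ s in c..r, h s) (Ici c) := by
  intro x hx
  have hcx : c ≤ x + 1 := by linarith [mem_Ici.mp hx]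
  have hIcc := continuousOn_primitive_interval' (hh.intervalIntegrable_of_Ici le_rfl hcx)
    left_mem_uIcc
  rw [uIcc_of_le hcx] at hIcc
  refine (hIcc x ⟨hx, by linarith⟩).mono_of_mem_nhdsWithin ?_
  rw [← Ici_inter_Iic]
  exact inter_mem self_mem_nhdsWithin (mem_nhdsWithin_of_mem_nhds (Iic_mem_nhds (by linarith)))

theorem ContinuousOn.hasDerivAt_primitive_Ici (hh : ContinuousOn h (Ici c)) {x : ℝ} (hx : c < x) :
    HasDerivAt (fun r => ∫ s in c..r, h s) (h x) x :=
  integral_hasDerivAt_right (hh.intervalIntegrable_of_Ici le_rfl hx.le)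
    (ContinuousOn.stronglyMeasurableAtFilter isOpen_Ioi (hh.mono Ioi_subset_Ici_self) x hx)
    (hh.continuousAt (Ici_mem_nhds hx))

theorem ContinuousOn.sq_primitive_sub_sq_primitive (hh : ContinuousOn h (Ici c)) {R r : ℝ}
    (hR : c < R) (hRr : R ≤ r) :
    (∫ s in c..r, h s) ^ 2 - (∫ s in c..R, h s) ^ 2 =
      ∫ x in R..r, 2 * (∫ s in c..x, h s) * h x := by
  have hpos : ∀ x ∈ uIcc R r, c < x := fun x hx => hR.trans_le (uIcc_of_le hRr ▸ hx).1
  refine (integral_eq_sub_of_hasDerivAt (f := fun x => (∫ s in c..x, h s) ^ 2) (fun x hx => ?_)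
    ?_).symm
  · refine ((hh.hasDerivAt_primitive_Ici (hpos x hx)).fun_pow 2).congr_deriv ?_
    norm_num
  · exact ((continuousOn_const.fun_mul hh.continuousOn_primitive_Ici).fun_mul
      hh).intervalIntegrable_of_Ici hR.le (hR.le.trans hRr)

end Primitive

/-- The derivative of the solution of `(tⁿ u')' = tⁿ ψ` that is regular at `0`; the successive
approximations are `wᵢᵏ⁺¹ = 1/d + ∫₀ʳ radialPrimitive (N - 1) ψᵢᵏ`. -/
noncomputable def radialPrimitive (n : ℕ) (ψ : ℝ → ℝ) (t : ℝ) : ℝ :=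
  (∫ s in (0:ℝ)..t, s ^ n * ψ s) / t ^ n

section RadialPrimitive

variable {n : ℕ} {ψ χ : ℝ → ℝ} {t : ℝ}

theorem abs_radialPrimitive_le (ht : 0 ≤ t) (hψ : IntervalIntegrable ψ volume 0 t) :
    |radialPrimitive n ψ t| ≤ ∫ s in (0:ℝ)..t, |ψ s| := by
  rcases ht.eq_or_lt with rfl | ht
  · simp [radialPrimitive]
  have htn : 0 < t ^ n := pow_pos ht n
  rw [radialPrimitive, abs_div, abs_of_pos htn, div_le_iff₀ htn,
    ← intervalIntegral.integral_mul_const, ← Real.norm_eq_abs]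
  refine norm_integral_le_of_norm_le ht.le (ae_of_all _ fun s hs => ?_) (hψ.abs.mul_const _)
  rw [norm_mul, norm_pow, Real.norm_eq_abs, Real.norm_eq_abs, abs_of_pos hs.1, mul_comm]
  exact mul_le_mul_of_nonneg_left (pow_le_pow_left₀ hs.1.le hs.2 n) (abs_nonneg _)

theorem continuousOn_radialPrimitive (n : ℕ) (hψ : ContinuousOn ψ (Ici 0)) :
    ContinuousOn (radialPrimitive n ψ) (Ici 0) := by
  intro x hx
  rcases (mem_Ici.mp hx).eq_or_lt with rfl | hx
  · have hbound := hψ.abs.continuousOn_primitive_Ici 0 self_mem_Ici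
    rw [ContinuousWithinAt, integral_same] at hbound
    rw [ContinuousWithinAt, show radialPrimitive n ψ 0 = 0 by simp [radialPrimitive]]
    refine squeeze_zero_norm' ?_ hbound
    filter_upwards [self_mem_nhdsWithin] with t ht
    exact abs_radialPrimitive_le ht (hψ.intervalIntegrable_of_Ici le_rfl ht)
  · have hprim := ((continuous_pow n).continuousOn.fun_mul hψ).continuousOn_primitive_Ici
    exact ((hprim.continuousAt (Ici_mem_nhds hx)).div (continuous_pow n).continuousAt
      (pow_ne_zero n hx.ne')).continuousWithinAt

theorem radialPrimitive_nonneg (hψ : ∀ s, 0 ≤ s → 0 ≤ ψ s) (ht : 0 ≤ t) :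
    0 ≤ radialPrimitive n ψ t :=
  div_nonneg (integral_nonneg ht fun s hs => mul_nonneg (pow_nonneg hs.1 n) (hψ s hs.1))
    (pow_nonneg ht n)

theorem radialPrimitive_mono (hψ : ContinuousOn ψ (Ici 0)) (hχ : ContinuousOn χ (Ici 0))
    (hle : ∀ s ∈ Icc 0 t, ψ s ≤ χ s) (ht : 0 ≤ t) :
    radialPrimitive n ψ t ≤ radialPrimitive n χ t := by
  refine div_le_div_of_nonneg_right (integral_mono_on ht ?_ ?_ fun s hs => ?_) (pow_nonneg ht n)
  · exact ((continuous_pow n).continuousOn.fun_mul hψ).intervalIntegrable_of_Ici le_rfl ht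
  · exact ((continuous_pow n).continuousOn.fun_mul hχ).intervalIntegrable_of_Ici le_rfl ht
  · exact mul_le_mul_of_nonneg_left (hle s hs) (pow_nonneg hs.1 n)

theorem sum_radialPrimitive {ι : Type*} (u : Finset ι) {ψ : ι → ℝ → ℝ}
    (hψ : ∀ i ∈ u, ContinuousOn (ψ i) (Ici 0)) (ht : 0 ≤ t) :
    ∑ i ∈ u, radialPrimitive n (ψ i) t = radialPrimitive n (fun s => ∑ i ∈ u, ψ i s) t := by
  simp only [radialPrimitive, ← Finset.sum_div, Finset.mul_sum]
  rw [← integral_finsetSum fun i hi =>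
    ((continuous_pow n).continuousOn.fun_mul (hψ i hi)).intervalIntegrable_of_Ici le_rfl ht]

end RadialPrimitive

section Energy

variable {n : ℕ} {Ψ Φ G S : ℝ → ℝ} {R r : ℝ}

theorem sq_integral_le_of_hasDerivAt_radialPrimitive (hR : 0 < R) (hRr : R ≤ r)
    (hΨ : ContinuousOn Ψ (Ici 0)) (hΨ_nonneg : ∀ s, 0 ≤ s → 0 ≤ Ψ s)
    (hS : ∀ x, 0 < x → HasDerivAt S (radialPrimitive n Ψ x) x) (hS_nonneg : ∀ x, 0 < x → 0 ≤ S x)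
    (hG : ContinuousOn G (Ici 0)) (hG_nonneg : ∀ u, 0 ≤ u → 0 ≤ G u)
    (hΨΦ : ∀ s ∈ Icc R r, Ψ s ≤ Φ s * G (S s))
    (hΦ : ∀ s ∈ Icc R r, s ^ (2 * n) * Φ s ≤ r ^ (2 * n) * Φ r) :
    (∫ s in (0:ℝ)..r, s ^ n * Ψ s) ^ 2 ≤
      (∫ s in (0:ℝ)..R, s ^ n * Ψ s) ^ 2 + 2 * (r ^ (2 * n) * Φ r) * ∫ u in S R..S r, G u := by
  set E := fun x => ∫ s in (0:ℝ)..x, s ^ n * Ψ s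
  have hpos : ∀ x ∈ uIcc R r, 0 < x := fun x hx => hR.trans_le (uIcc_of_le hRr ▸ hx).1
  have hintegrand : ContinuousOn (fun s => s ^ n * Ψ s) (Ici 0) :=
    (continuous_pow n).continuousOn.fun_mul hΨ
  have hS'_cont : ContinuousOn (radialPrimitive n Ψ) (uIcc R r) :=
    (continuousOn_radialPrimitive n hΨ).mono fun x hx => (hpos x hx).le
  have hS_cont : ContinuousOn S (uIcc R r) := fun x hx =>
    (hS x (hpos x hx)).continuousAt.continuousWithinAt
  have hsubst : ∫ s in R..r, (G ∘ S) s * radialPrimitive n Ψ s = ∫ u in S R..S r, G u :=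
    integral_comp_mul_deriv' (fun x hx => hS x (hpos x hx)) hS'_cont
      (hG.mono (image_subset_iff.mpr fun x hx => hS_nonneg x (hpos x hx)))
  have hpointwise : ∀ s ∈ Icc R r, 2 * E s * (s ^ n * Ψ s) ≤
      2 * (r ^ (2 * n) * Φ r) * ((G ∘ S) s * radialPrimitive n Ψ s) := by
    intro s hs
    have hs0 : 0 < s := hR.trans_le hs.1
    set q := radialPrimitive n Ψ s
    have hq : 0 ≤ q := radialPrimitive_nonneg hΨ_nonneg hs0.le
    have hEq : E s = s ^ n * q := by
      simp only [q, radialPrimitive, E]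
      field_simp
    calc 2 * E s * (s ^ n * Ψ s) = 2 * q * (s ^ (2 * n) * Ψ s) := by rw [hEq]; ring
      _ ≤ 2 * q * (s ^ (2 * n) * (Φ s * G (S s))) := by gcongr; exact hΨΦ s hs
      _ = 2 * q * ((s ^ (2 * n) * Φ s) * G (S s)) := by ring
      _ ≤ 2 * q * ((r ^ (2 * n) * Φ r) * G (S s)) :=
        mul_le_mul_of_nonneg_left
          (mul_le_mul_of_nonneg_right (hΦ s hs) (hG_nonneg _ (hS_nonneg s hs0))) (by positivity)
      _ = 2 * (r ^ (2 * n) * Φ r) * ((G ∘ S) s * q) := by rw [Function.comp_apply]; ring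
  have hbound_int : IntervalIntegrable
      (fun s => 2 * (r ^ (2 * n) * Φ r) * ((G ∘ S) s * radialPrimitive n Ψ s)) volume R r :=
    (continuousOn_const.fun_mul ((hG.comp hS_cont fun x hx => hS_nonneg x (hpos x hx)).fun_mul
      hS'_cont)).intervalIntegrable
  have henergy_int : IntervalIntegrable (fun s => 2 * E s * (s ^ n * Ψ s)) volume R r :=
    ((continuousOn_const.fun_mul hintegrand.continuousOn_primitive_Ici).fun_mul
      hintegrand).intervalIntegrable_of_Ici hR.le (hR.le.trans hRr)
  have hmono := integral_mono_on hRr henergy_int hbound_int hpointwise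
  rw [intervalIntegral.integral_const_mul, hsubst,
    ← hintegrand.sq_primitive_sub_sq_primitive hR hRr] at hmono
  linarith

theorem deriv_le_of_hasDerivAt_radialPrimitive (hR : 0 < R) (hRr : R ≤ r)
    (hΨ : ContinuousOn Ψ (Ici 0)) (hΨ_nonneg : ∀ s, 0 ≤ s → 0 ≤ Ψ s)
    (hS : ∀ x, 0 < x → HasDerivAt S (radialPrimitive n Ψ x) x) (hS_nonneg : ∀ x, 0 < x → 0 ≤ S x)
    (hG : ContinuousOn G (Ici 0)) (hG_nonneg : ∀ u, 0 ≤ u → 0 ≤ G u)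
    (hΨΦ : ∀ s ∈ Icc R r, Ψ s ≤ Φ s * G (S s))
    (hΦ : ∀ s ∈ Icc R r, s ^ (2 * n) * Φ s ≤ r ^ (2 * n) * Φ r) (hΦr : 0 ≤ Φ r) :
    deriv S r ≤
      √((R ^ n * deriv S R) ^ 2) * (r ^ n)⁻¹ + √(2 * Φ r) * √(∫ u in (0:ℝ)..S r, G u) := by
  have hr : 0 < r := hR.trans_le hRr
  have hflux : ∀ x, 0 < x → x ^ n * deriv S x = ∫ s in (0:ℝ)..x, s ^ n * Ψ s := fun x hx => by
    rw [(hS x hx).deriv, radialPrimitive]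
    field_simp
  set F := ∫ u in (0:ℝ)..S r, G u
  have hG_int : ∀ x, 0 < x → IntervalIntegrable G volume 0 (S x) := fun x hx =>
    hG.intervalIntegrable_of_Ici le_rfl (hS_nonneg x hx)
  have hF : ∫ u in S R..S r, G u ≤ F := by
    rw [← integral_interval_sub_left (hG_int r hr) (hG_int R hR), sub_le_self_iff]
    exact integral_nonneg (hS_nonneg R hR) fun u hu => hG_nonneg u hu.1
  have hF_nonneg : 0 ≤ F := integral_nonneg (hS_nonneg r hr) fun u hu => hG_nonneg u hu.1
  set b := √(2 * Φ r) * √F * r ^ n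
  have hb : 0 ≤ b := by positivity
  have hsq : (r ^ n * deriv S r) ^ 2 ≤ (R ^ n * deriv S R) ^ 2 + b ^ 2 := by
    rw [hflux r hr, hflux R hR]
    calc _ ≤ _ := sq_integral_le_of_hasDerivAt_radialPrimitive hR hRr hΨ hΨ_nonneg hS hS_nonneg hG
          hG_nonneg hΨΦ hΦ
      _ ≤ (∫ s in (0:ℝ)..R, s ^ n * Ψ s) ^ 2 + 2 * (r ^ (2 * n) * Φ r) * F := by gcongr
      _ = _ := by
        rw [mul_pow, mul_pow, Real.sq_sqrt (by positivity), Real.sq_sqrt hF_nonneg]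
        ring
  have hflux_le : r ^ n * deriv S r ≤ √((R ^ n * deriv S R) ^ 2) + b := by
    have ha := Real.sqrt_nonneg ((R ^ n * deriv S R) ^ 2)
    have ha2 := Real.sq_sqrt (sq_nonneg (R ^ n * deriv S R))
    nlinarith
  have hrn : 0 < r ^ n := pow_pos hr n
  calc deriv S r = (r ^ n * deriv S r) * (r ^ n)⁻¹ := by field_simp
    _ ≤ (√((R ^ n * deriv S R) ^ 2) + b) * (r ^ n)⁻¹ := by gcongr
    _ = _ := by
      simp only [b]
      field_simp

end Energy

section SuccessiveApproximations

variable {d n : ℕ} {c : ℝ} {f : Fin d → (Fin d → ℝ) → ℝ} {φ : Fin d → ℝ → ℝ}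
  {w : ℕ → Fin d → ℝ → ℝ}

theorem sum_mul_apply_le_mul_sum_diag
    (hf_nonneg : ∀ j v, (∀ i, 0 ≤ v i) → 0 ≤ f j v)
    (hf_mono : ∀ j v w, (∀ i, 0 ≤ v i) → (∀ i, v i ≤ w i) → f j v ≤ f j w)
    {p v : Fin d → ℝ} {U : ℝ} (hp : ∀ i, 0 ≤ p i) (hv : ∀ i, 0 ≤ v i) (hvU : ∀ i, v i ≤ U) :
    ∑ i, p i * f i v ≤ (∑ i, p i) * ∑ j, f j fun _ => U := by
  rw [Finset.sum_mul]
  refine Finset.sum_le_sum fun i _ => mul_le_mul_of_nonneg_left ?_ (hp i)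
  have hU : 0 ≤ U := (hv i).trans (hvU i)
  exact (hf_mono i v _ hv hvU).trans <|
    Finset.single_le_sum (fun j _ => hf_nonneg j _ fun _ => hU) (Finset.mem_univ i)

theorem continuousOn_source (hf : ∀ j, ContinuousOn (f j) {v : Fin d → ℝ | ∀ i, 0 ≤ v i})
    (hφ : ∀ i, ContinuousOn (φ i) (Ici 0)) {v : Fin d → ℝ → ℝ}
    (hv : ∀ j, ContinuousOn (v j) (Ici 0) ∧ ∀ s, 0 ≤ s → 0 ≤ v j s) (i : Fin d) :
    ContinuousOn (fun s => φ i s * f i fun j => v j s) (Ici 0) :=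
  (hφ i).fun_mul <| (hf i).comp (continuousOn_pi.mpr fun j => (hv j).1) fun s hs j => (hv j).2 s hs

theorem source_nonneg (hf_nonneg : ∀ j v, (∀ i, 0 ≤ v i) → 0 ≤ f j v)
    (hφ_nonneg : ∀ i, ∀ t ≥ (0:ℝ), 0 ≤ φ i t) {v : Fin d → ℝ → ℝ} (i : Fin d) {s : ℝ}
    (hs : 0 ≤ s) (hv : ∀ j, 0 ≤ v j s) : 0 ≤ φ i s * f i fun j => v j s :=
  mul_nonneg (hφ_nonneg i s hs) (hf_nonneg i _ hv)

theorem iterates_continuousOn_nonneg (hc : 0 ≤ c)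
    (hf_nonneg : ∀ j v, (∀ i, 0 ≤ v i) → 0 ≤ f j v)
    (hf : ∀ j, ContinuousOn (f j) {v : Fin d → ℝ | ∀ i, 0 ≤ v i})
    (hφ : ∀ i, ContinuousOn (φ i) (Ici 0)) (hφ_nonneg : ∀ i, ∀ t ≥ (0:ℝ), 0 ≤ φ i t)
    (hw0 : ∀ i r, w 0 i r = c)
    (hwk : ∀ k i r, 0 ≤ r →
      w (k + 1) i r =
        c + ∫ t in (0:ℝ)..r, radialPrimitive n (fun s => φ i s * f i fun j => w k j s) t)
    (k : ℕ) (i : Fin d) : ContinuousOn (w k i) (Ici 0) ∧ ∀ r, 0 ≤ r → 0 ≤ w k i r := by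
  induction k generalizing i with
  | zero => exact ⟨continuousOn_const.congr fun r _ => hw0 i r, fun r _ => hw0 i r ▸ hc⟩
  | succ k ih =>
    have hg := continuousOn_radialPrimitive n (continuousOn_source hf hφ ih i)
    refine ⟨(continuousOn_const.add hg.continuousOn_primitive_Ici).congr fun r hr => hwk k i r hr,
      fun r hr => ?_⟩
    rw [hwk k i r hr]
    exact add_nonneg hc <| integral_nonneg hr fun t ht =>
      radialPrimitive_nonneg
        (fun s hs => source_nonneg hf_nonneg hφ_nonneg i hs fun j => (ih j).2 s hs) ht.1

theorem iterate_le_iterate_succ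
    (hf_nonneg : ∀ j v, (∀ i, 0 ≤ v i) → 0 ≤ f j v)
    (hf : ∀ j, ContinuousOn (f j) {v : Fin d → ℝ | ∀ i, 0 ≤ v i})
    (hf_mono : ∀ j v w, (∀ i, 0 ≤ v i) → (∀ i, v i ≤ w i) → f j v ≤ f j w)
    (hφ : ∀ i, ContinuousOn (φ i) (Ici 0)) (hφ_nonneg : ∀ i, ∀ t ≥ (0:ℝ), 0 ≤ φ i t)
    (hw : ∀ k j, ContinuousOn (w k j) (Ici 0) ∧ ∀ s, 0 ≤ s → 0 ≤ w k j s)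
    (hw0 : ∀ i r, w 0 i r = c)
    (hwk : ∀ k i r, 0 ≤ r →
      w (k + 1) i r =
        c + ∫ t in (0:ℝ)..r, radialPrimitive n (fun s => φ i s * f i fun j => w k j s) t)
    (k : ℕ) (i : Fin d) {r : ℝ} (hr : 0 ≤ r) : w k i r ≤ w (k + 1) i r := by
  induction k generalizing i r with
  | zero =>
    rw [hw0, hwk 0 i r hr, le_add_iff_nonneg_right]
    exact integral_nonneg hr fun t ht =>
      radialPrimitive_nonneg
        (fun s hs => source_nonneg hf_nonneg hφ_nonneg i hs fun j => (hw 0 j).2 s hs) ht.1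
  | succ k ih =>
    have hg := fun k => continuousOn_radialPrimitive n (continuousOn_source hf hφ (hw k) i)
    rw [hwk k i r hr, hwk (k + 1) i r hr, add_le_add_iff_left]
    refine integral_mono_on hr ((hg k).intervalIntegrable_of_Ici le_rfl hr)
      ((hg (k + 1)).intervalIntegrable_of_Ici le_rfl hr) fun t ht =>
        radialPrimitive_mono (continuousOn_source hf hφ (hw k) i)
          (continuousOn_source hf hφ (hw (k + 1)) i) (fun s hs => ?_) ht.1
    exact mul_le_mul_of_nonneg_left
      (hf_mono i _ _ (fun j => (hw k j).2 s hs.1) fun j => ih j hs.1) (hφ_nonneg i s hs.1)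

theorem hasDerivAt_sum_iterate_succ
    (hf : ∀ j, ContinuousOn (f j) {v : Fin d → ℝ | ∀ i, 0 ≤ v i})
    (hφ : ∀ i, ContinuousOn (φ i) (Ici 0)) {k : ℕ}
    (hw : ∀ j, ContinuousOn (w k j) (Ici 0) ∧ ∀ s, 0 ≤ s → 0 ≤ w k j s)
    (hwk : ∀ i r, 0 ≤ r →
      w (k + 1) i r =
        c + ∫ t in (0:ℝ)..r, radialPrimitive n (fun s => φ i s * f i fun j => w k j s) t)
    {x : ℝ} (hx : 0 < x) :
    HasDerivAt (fun r => ∑ i, w (k + 1) i r)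
      (radialPrimitive n (fun s => ∑ i, φ i s * f i fun j => w k j s) x) x := by
  rw [← sum_radialPrimitive _ (fun i _ => continuousOn_source hf hφ hw i) hx.le]
  refine HasDerivAt.fun_sum fun i _ => ?_
  have hprim :=
    (continuousOn_radialPrimitive n (continuousOn_source hf hφ hw i)).hasDerivAt_primitive_Ici hx
  exact (hprim.const_add c).congr_of_eventuallyEq
    (eventually_of_mem (Ioi_mem_nhds hx) fun y hy => hwk i y (le_of_lt hy))

end SuccessiveApproximations

theorem stmt11_general
    (N d : ℕ)
    (f : Fin d → (Fin d → ℝ) → ℝ)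
    -- (C1)
    (hf_nonneg : ∀ j v, (∀ i, 0 ≤ v i) → 0 ≤ f j v)
    (hC1 : ∀ j, ContDiffOn ℝ 1 (f j) {v : Fin d → ℝ | ∀ i, 0 ≤ v i})
    -- (C2)
    (hC2 : ∀ j v w, (∀ i, 0 ≤ v i) → (∀ i, v i ≤ w i) → f j v ≤ f j w)
    -- continuous nonnegative coefficients φ₁,…,φ_d
    (φ : Fin d → ℝ → ℝ)
    (hφ_cont : ∀ i, ContinuousOn (φ i) (Ici 0))
    (hφ_nonneg : ∀ i, ∀ t ≥ (0:ℝ), 0 ≤ φ i t)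
    -- r ↦ r^{2N-2} Σᵢ φᵢ(r) is nondecreasing on [R, ∞) for some R > 0
    (R : ℝ) (hR : 0 < R)
    (hmono : MonotoneOn (fun r : ℝ => r ^ (2 * N - 2) * ∑ i, φ i r) (Ici R))
    -- the successive approximations
    (w : ℕ → Fin d → ℝ → ℝ)
    (hw0 : ∀ i r, w 0 i r = 1 / (d : ℝ))
    (hwk : ∀ k i r, 0 ≤ r →
      w (k + 1) i r = 1 / (d : ℝ) +
        ∫ t in (0:ℝ)..r,
          (∫ s in (0:ℝ)..t, s ^ (N - 1) * (φ i s * f i (fun j => w k j s))) / t ^ (N - 1)) :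
    -- conclusion, with C = [R^{N-1} (Σᵢ wᵢᵏ)'(R)]² and F(s) = ∫₀^s Σᵢ fᵢ(t,…,t) dt
    ∀ k ≥ 1, ∀ r ≥ R,
      deriv (fun ρ => ∑ i, w k i ρ) r ≤
        Real.sqrt ((R ^ (N - 1) * deriv (fun ρ => ∑ i, w k i ρ) R) ^ 2) * (r ^ (N - 1))⁻¹ +
          Real.sqrt (2 * ∑ i, φ i r) *
            Real.sqrt (∫ t in (0:ℝ)..(∑ i, w k i r), ∑ i, f i (fun _ => t)) := by
  intro k hk r hr
  obtain ⟨m, rfl⟩ : ∃ m, k = m + 1 := ⟨k - 1, by omega⟩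
  have hf j := (hC1 j).continuousOn
  have hw := iterates_continuousOn_nonneg (by positivity) hf_nonneg hf hφ_cont hφ_nonneg hw0 hwk
  have hle_sum : ∀ j, ∀ s ≥ (0:ℝ), w m j s ≤ ∑ i, w (m + 1) i s := fun j s hs =>
    (iterate_le_iterate_succ hf_nonneg hf hC2 hφ_cont hφ_nonneg hw hw0 hwk m j hs).trans <|
      Finset.single_le_sum (fun i _ => (hw (m + 1) i).2 s hs) (Finset.mem_univ j)
  have hG_cont : ContinuousOn (fun u => ∑ j, f j fun _ => u) (Ici 0) :=
    continuousOn_finsetSum _ fun j _ =>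
      (hf j).comp (continuous_pi fun _ => continuous_id).continuousOn fun u hu _ => hu
  rw [← Nat.mul_sub_one] at hmono
  refine deriv_le_of_hasDerivAt_radialPrimitive hR hr
    (continuousOn_finsetSum _ fun i _ => continuousOn_source hf hφ_cont (hw m) i)
    (fun s hs => Finset.sum_nonneg fun i _ =>
      source_nonneg hf_nonneg hφ_nonneg i hs fun j => (hw m j).2 s hs)
    (fun x hx => hasDerivAt_sum_iterate_succ hf hφ_cont (hw m) (hwk m) hx)
    (fun x hx => Finset.sum_nonneg fun i _ => (hw (m + 1) i).2 x hx.le) hG_cont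
    (fun u hu => Finset.sum_nonneg fun j _ => hf_nonneg j _ fun _ => hu)
    (fun s hs => ?_) (fun s hs => hmono hs.1 hr hs.2)
    (Finset.sum_nonneg fun i _ => hφ_nonneg i r (hR.le.trans hr))
  have hs0 : 0 ≤ s := hR.le.trans hs.1
  exact sum_mul_apply_le_mul_sum_diag hf_nonneg hC2 (fun i => hφ_nonneg i s hs0)
    (fun j => (hw m j).2 s hs0) fun j => hle_sum j s hs0

theorem stmt11
    (N d : ℕ) (hN : 3 ≤ N) (hd : 1 ≤ d)
    (f : Fin d → (Fin d → ℝ) → ℝ)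
    -- (C1)
    (hf_nonneg : ∀ j v, (∀ i, 0 ≤ v i) → 0 ≤ f j v)
    (hC1 : ∀ j, ContDiffOn ℝ 1 (f j) {v : Fin d → ℝ | ∀ i, 0 ≤ v i})
    (hf0 : ∀ j, f j (fun _ => 0) = 0)
    (hfpos : ∀ j v, (∀ i, 0 ≤ v i) → (∃ i, 0 < v i) → 0 < f j v)
    -- (C2)
    (hC2 : ∀ j v w, (∀ i, 0 ≤ v i) → (∀ i, v i ≤ w i) → f j v ≤ f j w)
    -- continuous nonnegative coefficients φ₁,…,φ_d
    (φ : Fin d → ℝ → ℝ)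
    (hφ_cont : ∀ i, ContinuousOn (φ i) (Ici 0))
    (hφ_nonneg : ∀ i, ∀ t ≥ (0:ℝ), 0 ≤ φ i t)
    -- r ↦ r^{2N-2} Σᵢ φᵢ(r) is nondecreasing on [R, ∞) for some R > 0
    (R : ℝ) (hR : 0 < R)
    (hmono : MonotoneOn (fun r : ℝ => r ^ (2 * N - 2) * ∑ i, φ i r) (Ici R))
    -- the successive approximations
    (w : ℕ → Fin d → ℝ → ℝ)
    (hw0 : ∀ i r, w 0 i r = 1 / (d : ℝ))
    (hwk : ∀ k i r, 0 ≤ r →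
      w (k + 1) i r = 1 / (d : ℝ) +
        ∫ t in (0:ℝ)..r,
          (∫ s in (0:ℝ)..t, s ^ (N - 1) * (φ i s * f i (fun j => w k j s))) / t ^ (N - 1)) :
    -- conclusion, with C = [R^{N-1} (Σᵢ wᵢᵏ)'(R)]² and F(s) = ∫₀^s Σᵢ fᵢ(t,…,t) dt
    ∀ k ≥ 1, ∀ r ≥ R,
      deriv (fun ρ => ∑ i, w k i ρ) r ≤
        Real.sqrt ((R ^ (N - 1) * deriv (fun ρ => ∑ i, w k i ρ) R) ^ 2) * (r ^ (N - 1))⁻¹ +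
          Real.sqrt (2 * ∑ i, φ i r) *
            Real.sqrt (∫ t in (0:ℝ)..(∑ i, w k i r), ∑ i, f i (fun _ => t)) :=
  stmt11_general N d f hf_nonneg hC1 hC2 φ hφ_cont hφ_nonneg R hR hmono w hw0 hwk
end
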